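/- arXiv:2108.06638 — 7 statements merged into one kernel-verified Lean document; each statement's English description precedes it below -/
import Mathlib

section
/- The 6×6 matrix V with rows (13,8,4,2,0,0),(8,13,2,1,0,0),(4,2,10,6,1,1),(2,1,6,13,10,10),(0,0,1,10,13,8),(0,0,1,10,8,13) and its inverse have the same sparsity pattern: for all i,j, V i j = 0 if and only if (V⁻¹) i j = 0. -/
set_option maxHeartbeats 2000000


open Matrix


@[simp] lemma cons_val_five' {α : Type*} {m : ℕ} (x : α) (u : Fin m.succ.succ.succ.succ.succ → α) :
    Matrix.vecCons x u 5 = Matrix.vecHead (Matrix.vecTail (Matrix.vecTail (Matrix.vecTail (Matrix.vecTail u)))) :=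
  rfl

noncomputable def Vinv : Matrix (Fin 6) (Fin 6) ℚ :=
  (1/21540 : ℚ) •
  !![2960,-1690,-900,90,0,0;
     -1690,2675,150,-15,0,0;
     -900,150,8715,-12180,5385,5385;
     90,-15,-12180,23835,-10770,-10770;
     0,0,5385,-10770,7539,3231;
     0,0,5385,-10770,3231,7539]

theorem stmt_1 :
    ∀ i j : Fin 6,
      (!![13, 8, 4, 2, 0, 0;
          8, 13, 2, 1, 0, 0;
          4, 2, 10, 6, 1, 1;
          2, 1, 6, 13, 10, 10;
          0, 0, 1, 10, 13, 8;
          0, 0, 1, 10, 8, 13] : Matrix (Fin 6) (Fin 6) ℚ) i j = 0 ↔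
      (!![13, 8, 4, 2, 0, 0;
          8, 13, 2, 1, 0, 0;
          4, 2, 10, 6, 1, 1;
          2, 1, 6, 13, 10, 10;
          0, 0, 1, 10, 13, 8;
          0, 0, 1, 10, 8, 13] : Matrix (Fin 6) (Fin 6) ℚ)⁻¹ i j = 0 := by
  have h : (!![13, 8, 4, 2, 0, 0;
          8, 13, 2, 1, 0, 0;
          4, 2, 10, 6, 1, 1;
          2, 1, 6, 13, 10, 10;
          0, 0, 1, 10, 13, 8;
          0, 0, 1, 10, 8, 13] : Matrix (Fin 6) (Fin 6) ℚ)⁻¹ = Vinv := by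
    apply inv_eq_right_inv
    ext i j
    fin_cases i <;> fin_cases j <;>
      simp [Vinv, Matrix.mul_apply, Fin.sum_univ_six, Matrix.one_apply, Matrix.vecHead, Matrix.vecTail] <;> norm_num
  rw [h]
  intro i j
  fin_cases i <;> fin_cases j <;> simp [Vinv, Matrix.vecHead, Matrix.vecTail] <;> norm_num
end

section
/- Let M be an invertible 3×3 block matrix with blocks M₁₁,M₁₂,M₁₃; M₂₁,M₂₂,M₂₃; M₃₁,M₃₂,M₃₃, where M₂₂ is invertible, M₁₃ = M₁₂ M₂₂⁻¹ M₂₃, and M₃₁ = M₃₂ M₂₂⁻¹ M₂₁. Suppose additionally that the 2×2 sub-block matrices A = [[M₁₁,M₁₂],[M₂₁,M₂₂]] and B = [[M₂₂,M₂₃],[M₃₂,M₃₃]] are invertible. Then M⁻¹ equals the sum of A⁻¹ embedded in the top-left 2×2 block position (zero elsewhere), plus B⁻¹ embedded in the bottom-right 2×2 block position (zero elsewhere), minus M₂₂⁻¹ embedded in the central block position (zero elsewhere). -/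
open Matrix

variable {K : Type*} [Field K]
variable {α β γ : Type*} [Fintype α] [Fintype β] [Fintype γ]
  [DecidableEq α] [DecidableEq β] [DecidableEq γ]

/-- A 3×3 block matrix assembled from its nine blocks. -/
def blk3 (M11 : Matrix α α K) (M12 : Matrix α β K) (M13 : Matrix α γ K)
    (M21 : Matrix β α K) (M22 : Matrix β β K) (M23 : Matrix β γ K)
    (M31 : Matrix γ α K) (M32 : Matrix γ β K) (M33 : Matrix γ γ K) :
    Matrix (α ⊕ (β ⊕ γ)) (α ⊕ (β ⊕ γ)) K :=
  Matrix.fromBlocks M11 (Matrix.fromCols M12 M13) (Matrix.fromRows M21 M31)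
    (Matrix.fromBlocks M22 M23 M32 M33)

/-- Embed a matrix on the first two block indices, zero elsewhere. -/
def embA (A : Matrix (α ⊕ β) (α ⊕ β) K) : Matrix (α ⊕ (β ⊕ γ)) (α ⊕ (β ⊕ γ)) K :=
  blk3 A.toBlocks₁₁ A.toBlocks₁₂ 0 A.toBlocks₂₁ A.toBlocks₂₂ 0 0 0 0

/-- Embed a matrix on the last two block indices, zero elsewhere. -/
def embB (B : Matrix (β ⊕ γ) (β ⊕ γ) K) : Matrix (α ⊕ (β ⊕ γ)) (α ⊕ (β ⊕ γ)) K :=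
  blk3 0 0 0 0 B.toBlocks₁₁ B.toBlocks₁₂ 0 B.toBlocks₂₁ B.toBlocks₂₂

/-- Embed a matrix on the middle block index, zero elsewhere. -/
def embC (C : Matrix β β K) : Matrix (α ⊕ (β ⊕ γ)) (α ⊕ (β ⊕ γ)) K :=
  blk3 0 0 0 0 C 0 0 0 0

set_option linter.unusedSectionVars false

lemma blk3_add (a11 : Matrix α α K) (a12 : Matrix α β K) (a13 : Matrix α γ K)
    (a21 : Matrix β α K) (a22 : Matrix β β K) (a23 : Matrix β γ K)
    (a31 : Matrix γ α K) (a32 : Matrix γ β K) (a33 : Matrix γ γ K)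
    (b11 : Matrix α α K) (b12 : Matrix α β K) (b13 : Matrix α γ K)
    (b21 : Matrix β α K) (b22 : Matrix β β K) (b23 : Matrix β γ K)
    (b31 : Matrix γ α K) (b32 : Matrix γ β K) (b33 : Matrix γ γ K) :
    blk3 a11 a12 a13 a21 a22 a23 a31 a32 a33 + blk3 b11 b12 b13 b21 b22 b23 b31 b32 b33 =
      blk3 (a11+b11) (a12+b12) (a13+b13) (a21+b21) (a22+b22) (a23+b23) (a31+b31) (a32+b32)
        (a33+b33) := by
  ext (i|i|i) (j|j|j) <;> simp [blk3, fromBlocks, fromCols, fromRows_apply_inl, fromRows_apply_inr]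

lemma blk3_sub (a11 : Matrix α α K) (a12 : Matrix α β K) (a13 : Matrix α γ K)
    (a21 : Matrix β α K) (a22 : Matrix β β K) (a23 : Matrix β γ K)
    (a31 : Matrix γ α K) (a32 : Matrix γ β K) (a33 : Matrix γ γ K)
    (b11 : Matrix α α K) (b12 : Matrix α β K) (b13 : Matrix α γ K)
    (b21 : Matrix β α K) (b22 : Matrix β β K) (b23 : Matrix β γ K)
    (b31 : Matrix γ α K) (b32 : Matrix γ β K) (b33 : Matrix γ γ K) :
    blk3 a11 a12 a13 a21 a22 a23 a31 a32 a33 - blk3 b11 b12 b13 b21 b22 b23 b31 b32 b33 =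
      blk3 (a11-b11) (a12-b12) (a13-b13) (a21-b21) (a22-b22) (a23-b23) (a31-b31) (a32-b32)
        (a33-b33) := by
  ext (i|i|i) (j|j|j) <;> simp [blk3, fromBlocks, fromCols, fromRows_apply_inl, fromRows_apply_inr]

lemma fromColumns_fromRows_eq_fromBlocks {m₁ m₂ n₁ n₂ : Type*}
    (a : Matrix m₁ n₁ K) (b : Matrix m₂ n₁ K) (c : Matrix m₁ n₂ K) (d : Matrix m₂ n₂ K) :
    fromCols (fromRows a b) (fromRows c d) = fromBlocks a c b d := by
  ext (i|i) (j|j) <;> simp [fromBlocks, fromCols, fromRows_apply_inl, fromRows_apply_inr]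

lemma blk3_mul (a11 : Matrix α α K) (a12 : Matrix α β K) (a13 : Matrix α γ K)
    (a21 : Matrix β α K) (a22 : Matrix β β K) (a23 : Matrix β γ K)
    (a31 : Matrix γ α K) (a32 : Matrix γ β K) (a33 : Matrix γ γ K)
    (b11 : Matrix α α K) (b12 : Matrix α β K) (b13 : Matrix α γ K)
    (b21 : Matrix β α K) (b22 : Matrix β β K) (b23 : Matrix β γ K)
    (b31 : Matrix γ α K) (b32 : Matrix γ β K) (b33 : Matrix γ γ K) :
    blk3 a11 a12 a13 a21 a22 a23 a31 a32 a33 * blk3 b11 b12 b13 b21 b22 b23 b31 b32 b33 =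
      blk3 (a11*b11 + (a12*b21 + a13*b31)) (a11*b12 + (a12*b22 + a13*b32))
        (a11*b13 + (a12*b23 + a13*b33))
        (a21*b11 + (a22*b21 + a23*b31)) (a21*b12 + (a22*b22 + a23*b32))
        (a21*b13 + (a22*b23 + a23*b33))
        (a31*b11 + (a32*b21 + a33*b31)) (a31*b12 + (a32*b22 + a33*b32))
        (a31*b13 + (a32*b23 + a33*b33)) := by
  simp only [blk3, fromBlocks_multiply, fromCols_mul_fromRows, mul_fromCols,
    fromCols_mul_fromBlocks, fromRows_mul, fromBlocks_mul_fromRows,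
    fromColumns_fromRows_eq_fromBlocks, fromBlocks_add]
  ext (i|i|i) (j|j|j) <;> simp [fromBlocks, fromCols, fromRows_apply_inl, fromRows_apply_inr]

lemma blk3_one : blk3 (1 : Matrix α α K) 0 0 0 (1 : Matrix β β K) 0 0 0 (1 : Matrix γ γ K) = 1 := by
  simp [blk3, fromCols_zero, fromRows_zero, fromBlocks_one]

lemma blk3_congr {a11 b11 : Matrix α α K} {a12 b12 : Matrix α β K} {a13 b13 : Matrix α γ K}
    {a21 b21 : Matrix β α K} {a22 b22 : Matrix β β K} {a23 b23 : Matrix β γ K}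
    {a31 b31 : Matrix γ α K} {a32 b32 : Matrix γ β K} {a33 b33 : Matrix γ γ K}
    (h11 : a11 = b11) (h12 : a12 = b12) (h13 : a13 = b13)
    (h21 : a21 = b21) (h22 : a22 = b22) (h23 : a23 = b23)
    (h31 : a31 = b31) (h32 : a32 = b32) (h33 : a33 = b33) :
    blk3 a11 a12 a13 a21 a22 a23 a31 a32 a33 = blk3 b11 b12 b13 b21 b22 b23 b31 b32 b33 := by
  subst h11 h12 h13 h21 h22 h23 h31 h32 h33; rfl

theorem stmt_3 (M11 : Matrix α α K) (M12 : Matrix α β K) (M13 : Matrix α γ K)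
    (M21 : Matrix β α K) (M22 : Matrix β β K) (M23 : Matrix β γ K)
    (M31 : Matrix γ α K) (M32 : Matrix γ β K) (M33 : Matrix γ γ K)
    (hM22 : IsUnit M22.det)
    (h13 : M13 = M12 * M22⁻¹ * M23)
    (h31 : M31 = M32 * M22⁻¹ * M21)
    (hM : IsUnit (blk3 M11 M12 M13 M21 M22 M23 M31 M32 M33).det)
    (hA : IsUnit (Matrix.fromBlocks M11 M12 M21 M22).det)
    (hB : IsUnit (Matrix.fromBlocks M22 M23 M32 M33).det) :
    (blk3 M11 M12 M13 M21 M22 M23 M31 M32 M33)⁻¹ =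
      embA (Matrix.fromBlocks M11 M12 M21 M22)⁻¹ +
      embB (Matrix.fromBlocks M22 M23 M32 M33)⁻¹ - embC M22⁻¹ := by
  have hC : M22 * M22⁻¹ = 1 := mul_nonsing_inv _ hM22
  have hC' : M22⁻¹ * M22 = 1 := nonsing_inv_mul _ hM22
  obtain ⟨p11, p12, p21, p22, hP⟩ :
      ∃ p11 p12 p21 p22, (fromBlocks M11 M12 M21 M22)⁻¹ = fromBlocks p11 p12 p21 p22 :=
    ⟨_, _, _, _, (fromBlocks_toBlocks _).symm⟩
  obtain ⟨q11, q12, q21, q22, hQ⟩ :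
      ∃ q11 q12 q21 q22, (fromBlocks M22 M23 M32 M33)⁻¹ = fromBlocks q11 q12 q21 q22 :=
    ⟨_, _, _, _, (fromBlocks_toBlocks _).symm⟩
  have hAP : fromBlocks M11 M12 M21 M22 * fromBlocks p11 p12 p21 p22 = 1 := by
    rw [← hP]; exact mul_nonsing_inv _ hA
  have hBQ : fromBlocks M22 M23 M32 M33 * fromBlocks q11 q12 q21 q22 = 1 := by
    rw [← hQ]; exact mul_nonsing_inv _ hB
  rw [fromBlocks_multiply, ← fromBlocks_one, fromBlocks_inj] at hAP hBQ
  obtain ⟨e1, e2, e3, e4⟩ := hAP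
  obtain ⟨f1, f2, f3, f4⟩ := hBQ
  have hp21 : p21 = -(M22⁻¹ * (M21 * p11)) := by
    have h : M22 * p21 = -(M21 * p11) := by
      have h2 := e3; rw [add_comm] at h2; exact eq_neg_of_add_eq_zero_left h2
    calc p21 = M22⁻¹ * M22 * p21 := by rw [hC', Matrix.one_mul]
      _ = M22⁻¹ * (M22 * p21) := by rw [Matrix.mul_assoc]
      _ = -(M22⁻¹ * (M21 * p11)) := by rw [h, Matrix.mul_neg]
  have hp22 : p22 = M22⁻¹ - M22⁻¹ * (M21 * p12) := by
    have h : M22 * p22 = 1 - M21 * p12 := by rw [eq_sub_iff_add_eq, add_comm]; exact e4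
    calc p22 = M22⁻¹ * M22 * p22 := by rw [hC', Matrix.one_mul]
      _ = M22⁻¹ * (M22 * p22) := by rw [Matrix.mul_assoc]
      _ = M22⁻¹ - M22⁻¹ * (M21 * p12) := by rw [h, Matrix.mul_sub, Matrix.mul_one]
  have hq11 : q11 = M22⁻¹ - M22⁻¹ * (M23 * q21) := by
    have h : M22 * q11 = 1 - M23 * q21 := by rw [eq_sub_iff_add_eq]; exact f1
    calc q11 = M22⁻¹ * M22 * q11 := by rw [hC', Matrix.one_mul]
      _ = M22⁻¹ * (M22 * q11) := by rw [Matrix.mul_assoc]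
      _ = M22⁻¹ - M22⁻¹ * (M23 * q21) := by rw [h, Matrix.mul_sub, Matrix.mul_one]
  have hq12 : q12 = -(M22⁻¹ * (M23 * q22)) := by
    have h : M22 * q12 = -(M23 * q22) := by
      exact eq_neg_of_add_eq_zero_left f2
    calc q12 = M22⁻¹ * M22 * q12 := by rw [hC', Matrix.one_mul]
      _ = M22⁻¹ * (M22 * q12) := by rw [Matrix.mul_assoc]
      _ = -(M22⁻¹ * (M23 * q22)) := by rw [h, Matrix.mul_neg]
  apply inv_eq_right_inv
  rw [hP, hQ, h13, h31]
  have hRHS : embA (fromBlocks p11 p12 p21 p22) + embB (fromBlocks q11 q12 q21 q22)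
      - embC (M22⁻¹) = blk3 p11 p12 0 p21 (p22 + q11 - M22⁻¹) q12 0 q21 q22 := by
    simp only [embA, embB, embC, toBlocks_fromBlocks₁₁, toBlocks_fromBlocks₁₂,
      toBlocks_fromBlocks₂₁, toBlocks_fromBlocks₂₂, blk3_add, blk3_sub]
    exact blk3_congr (by abel) (by abel) (by abel) (by abel) (by abel) (by abel)
      (by abel) (by abel) (by abel)
  rw [hRHS, blk3_mul, ← blk3_one]
  simp only [hp21, hp22, hq11, hq12] at e1 e2 f3 f4 ⊢
  simp only [Matrix.mul_add, Matrix.mul_sub, Matrix.mul_neg, Matrix.mul_zero,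
    Matrix.zero_mul, Matrix.mul_one, Matrix.one_mul, Matrix.neg_mul, sub_mul,
    ← Matrix.mul_assoc, hC, hC', add_zero, zero_add, mul_zero, zero_mul] at e1 e2 f3 f4 ⊢
  refine blk3_congr ?_ ?_ ?_ ?_ ?_ ?_ ?_ ?_ ?_
  · rw [← e1]
    try abel
    try abel
  · rw [← e2]
    try abel
  · abel
  · abel
  · abel
  · abel
  · abel
  · rw [← f3]
    try abel
    try abel
  · rw [← f4]
    try abel
end

section
/- Let M be a 3×3 block matrix as above with M₂₂ invertible and M₁₃ = M₁₂ M₂₂⁻¹ M₂₃, M₃₁ = M₃₂ M₂₂⁻¹ M₂₁, and suppose M is invertible. Then the (1,3) block and the (3,1) block of M⁻¹ are both zero. -/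
open Matrix

variable {K : Type*} [Field K]
variable {α β γ : Type*} [Fintype α] [Fintype β] [Fintype γ]
  [DecidableEq α] [DecidableEq β] [DecidableEq γ]

lemma fromColumns_add' {m n₁ n₂ : Type*} (A₁ C₁ : Matrix m n₁ K) (A₂ C₂ : Matrix m n₂ K) :
    fromCols A₁ A₂ + fromCols C₁ C₂ = fromCols (A₁ + C₁) (A₂ + C₂) := by
  ext i (j | j) <;> simp [Matrix.fromCols, Matrix.fromCols_apply_inl, Matrix.fromCols_apply_inr]

lemma fromRows_add' {m₁ m₂ n : Type*} (A₁ C₁ : Matrix m₁ n K) (A₂ C₂ : Matrix m₂ n K) :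
    fromRows A₁ A₂ + fromRows C₁ C₂ = fromRows (A₁ + C₁) (A₂ + C₂) := by
  ext (i | i) j <;> simp [Matrix.fromRows_apply_inl, Matrix.fromRows_apply_inr]

lemma key_factor (M11 : Matrix α α K) (M12 : Matrix α β K)
    (M21 : Matrix β α K) (M22 : Matrix β β K) (M23 : Matrix β γ K)
    (M32 : Matrix γ β K) (M33 : Matrix γ γ K)
    (hM22 : IsUnit M22.det) :
    (fromBlocks 1 (fromCols (-(M12 * M22⁻¹)) 0) 0
        (fromBlocks 1 0 (-(M32 * M22⁻¹)) 1) : Matrix (α ⊕ (β ⊕ γ)) (α ⊕ (β ⊕ γ)) K) *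
      blk3 M11 M12 (M12 * M22⁻¹ * M23) M21 M22 M23 (M32 * M22⁻¹ * M21) M32 M33 *
      (fromBlocks 1 0 (fromRows (-(M22⁻¹ * M21)) 0)
        (fromBlocks 1 (-(M22⁻¹ * M23)) 0 1)) =
    fromBlocks (M11 - M12 * M22⁻¹ * M21) 0 0
      (fromBlocks M22 0 0 (M33 - M32 * M22⁻¹ * M23)) := by
  have h1 : M22⁻¹ * M22 = 1 := nonsing_inv_mul _ hM22
  have h2 : M22 * M22⁻¹ = 1 := mul_nonsing_inv _ hM22
  unfold blk3
  simp [Matrix.fromBlocks_multiply, Matrix.fromCols_mul_fromRows,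
    Matrix.fromCols_mul_fromBlocks, Matrix.fromBlocks_mul_fromRows,
    Matrix.fromRows_mul, Matrix.mul_fromCols, Matrix.fromRows_mul_fromCols,
    fromColumns_add', fromRows_add', Matrix.fromCols_zero, Matrix.fromRows_zero,
    Matrix.mul_assoc, h1, h2, Matrix.mul_nonsing_inv_cancel_left _ _ hM22,
    Matrix.nonsing_inv_mul_cancel_left _ _ hM22, sub_eq_add_neg]
  abel

theorem stmt_4 (M11 : Matrix α α K) (M12 : Matrix α β K)
    (M21 : Matrix β α K) (M22 : Matrix β β K) (M23 : Matrix β γ K)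
    (M32 : Matrix γ β K) (M33 : Matrix γ γ K)
    (hM22 : IsUnit M22.det)
    (hM : IsUnit (blk3 M11 M12 (M12 * M22⁻¹ * M23) M21 M22 M23
      (M32 * M22⁻¹ * M21) M32 M33).det) :
    ∀ (a : α) (c : γ),
      (blk3 M11 M12 (M12 * M22⁻¹ * M23) M21 M22 M23 (M32 * M22⁻¹ * M21) M32 M33)⁻¹
          (Sum.inl a) (Sum.inr (Sum.inr c)) = 0 ∧
      (blk3 M11 M12 (M12 * M22⁻¹ * M23) M21 M22 M23 (M32 * M22⁻¹ * M21) M32 M33)⁻¹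
          (Sum.inr (Sum.inr c)) (Sum.inl a) = 0 := by
  have h1 : M22⁻¹ * M22 = 1 := nonsing_inv_mul _ hM22
  have h2 : M22 * M22⁻¹ = 1 := mul_nonsing_inv _ hM22
  set W := blk3 M11 M12 (M12 * M22⁻¹ * M23) M21 M22 M23 (M32 * M22⁻¹ * M21) M32 M33 with hW
  set S1 := M11 - M12 * M22⁻¹ * M21 with hS1def
  set S3 := M33 - M32 * M22⁻¹ * M23 with hS3def
  set E : Matrix (α ⊕ (β ⊕ γ)) (α ⊕ (β ⊕ γ)) K :=
    fromBlocks 1 (fromCols (-(M12 * M22⁻¹)) 0) 0 (fromBlocks 1 0 (-(M32 * M22⁻¹)) 1) with hEdef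
  set E' : Matrix (α ⊕ (β ⊕ γ)) (α ⊕ (β ⊕ γ)) K :=
    fromBlocks 1 (fromCols (M12 * M22⁻¹) 0) 0 (fromBlocks 1 0 (M32 * M22⁻¹) 1) with hE'def
  set F : Matrix (α ⊕ (β ⊕ γ)) (α ⊕ (β ⊕ γ)) K :=
    fromBlocks 1 0 (fromRows (-(M22⁻¹ * M21)) 0) (fromBlocks 1 (-(M22⁻¹ * M23)) 0 1) with hFdef
  set F' : Matrix (α ⊕ (β ⊕ γ)) (α ⊕ (β ⊕ γ)) K :=
    fromBlocks 1 0 (fromRows (M22⁻¹ * M21) 0) (fromBlocks 1 (M22⁻¹ * M23) 0 1) with hF'def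
  set D : Matrix (α ⊕ (β ⊕ γ)) (α ⊕ (β ⊕ γ)) K :=
    fromBlocks S1 0 0 (fromBlocks M22 0 0 S3) with hDdef
  have hE'E : E' * E = 1 := by
    simp [hEdef, hE'def, Matrix.fromBlocks_multiply, Matrix.fromCols_mul_fromRows,
      Matrix.fromCols_mul_fromBlocks, Matrix.fromBlocks_mul_fromRows,
      Matrix.fromRows_mul, Matrix.mul_fromCols, fromColumns_add',
      Matrix.fromCols_zero, ← Matrix.fromBlocks_one]
  have hFF' : F * F' = 1 := by
    simp [hFdef, hF'def, Matrix.fromBlocks_multiply, Matrix.fromCols_mul_fromRows,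
      Matrix.fromBlocks_mul_fromRows, Matrix.fromRows_mul, fromRows_add',
      Matrix.fromRows_zero, ← Matrix.fromBlocks_one]
  have hfac : E * W * F = D :=
    key_factor M11 M12 M21 M22 M23 M32 M33 hM22
  have hEdet : IsUnit E.det := Matrix.isUnit_det_of_left_inverse hE'E
  have hFdet : IsUnit F.det := Matrix.isUnit_det_of_right_inverse hFF'
  have hDdet : IsUnit D.det := by
    rw [← hfac, Matrix.det_mul, Matrix.det_mul]
    exact (hEdet.mul hM).mul hFdet
  have hDdet' : D.det = S1.det * (M22.det * S3.det) := by
    rw [hDdef, Matrix.det_fromBlocks_zero₁₂, Matrix.det_fromBlocks_zero₁₂]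
  rw [hDdet'] at hDdet
  have hS1 : IsUnit S1.det := isUnit_of_mul_isUnit_left hDdet
  have hS3 : IsUnit S3.det := isUnit_of_mul_isUnit_right (isUnit_of_mul_isUnit_right hDdet)
  set D' : Matrix (α ⊕ (β ⊕ γ)) (α ⊕ (β ⊕ γ)) K :=
    fromBlocks S1⁻¹ 0 0 (fromBlocks M22⁻¹ 0 0 S3⁻¹) with hD'def
  have hDD' : D * D' = 1 := by
    simp [hDdef, hD'def, Matrix.fromBlocks_multiply, mul_nonsing_inv _ hS1,
      mul_nonsing_inv _ hM22, mul_nonsing_inv _ hS3, ← Matrix.fromBlocks_one]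
  have hWF : W * F = E' * D := by
    rw [← hfac, ← Matrix.mul_assoc, ← Matrix.mul_assoc, hE'E, Matrix.one_mul]
  have hright : W * (F * D' * E) = 1 := by
    rw [← Matrix.mul_assoc, ← Matrix.mul_assoc, hWF, Matrix.mul_assoc E' D D', hDD',
      Matrix.mul_one, hE'E]
  have hinv : W⁻¹ = F * D' * E := Matrix.inv_eq_right_inv hright
  intro a c
  rw [hinv]
  constructor <;>
    simp [hFdef, hD'def, hEdef, Matrix.fromBlocks_multiply, Matrix.fromCols_mul_fromRows,
      Matrix.fromCols_mul_fromBlocks, Matrix.fromBlocks_mul_fromRows,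
      Matrix.fromRows_mul, Matrix.mul_fromCols, Matrix.fromBlocks_apply₁₂,
      Matrix.fromBlocks_apply₂₁, Matrix.fromCols_apply_inr, Matrix.fromRows_apply_inr]
end

section
/- Conversely, let M be an invertible 3×3 block matrix such that M₂₂ is invertible and the (1,3) and (3,1) blocks of M⁻¹ are zero. Then M₁₃ = M₁₂ M₂₂⁻¹ M₂₃ and M₃₁ = M₃₂ M₂₂⁻¹ M₂₁. -/
open Matrix

variable {K : Type*} [Field K]
variable {α β γ : Type*} [Fintype α] [Fintype β] [Fintype γ]
  [DecidableEq α] [DecidableEq β] [DecidableEq γ]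

theorem stmt_5 (M11 : Matrix α α K) (M12 : Matrix α β K) (M13 : Matrix α γ K)
    (M21 : Matrix β α K) (M22 : Matrix β β K) (M23 : Matrix β γ K)
    (M31 : Matrix γ α K) (M32 : Matrix γ β K) (M33 : Matrix γ γ K)
    (hM22 : IsUnit M22.det)
    (hM : IsUnit (blk3 M11 M12 M13 M21 M22 M23 M31 M32 M33).det)
    (h13 : ∀ (a : α) (c : γ),
      (blk3 M11 M12 M13 M21 M22 M23 M31 M32 M33)⁻¹ (Sum.inl a) (Sum.inr (Sum.inr c)) = 0)
    (h31 : ∀ (a : α) (c : γ),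
      (blk3 M11 M12 M13 M21 M22 M23 M31 M32 M33)⁻¹ (Sum.inr (Sum.inr c)) (Sum.inl a) = 0) :
    M13 = M12 * M22⁻¹ * M23 ∧ M31 = M32 * M22⁻¹ * M21 := by
  set Mb := blk3 M11 M12 M13 M21 M22 M23 M31 M32 M33 with hMbdef
  set N := Mb⁻¹ with hNdef
  have hMN : Mb * N = 1 := mul_nonsing_inv _ hM
  have hNM : N * Mb = 1 := nonsing_inv_mul _ hM
  set S12 : Matrix β γ K := Matrix.of fun b c => N (Sum.inr (Sum.inl b)) (Sum.inr (Sum.inr c))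
    with hS12def
  set S21 : Matrix γ β K := Matrix.of fun c b => N (Sum.inr (Sum.inr c)) (Sum.inr (Sum.inl b))
    with hS21def
  set S22 : Matrix γ γ K := Matrix.of fun c c' => N (Sum.inr (Sum.inr c)) (Sum.inr (Sum.inr c'))
    with hS22def
  have e1 : M12 * S12 + M13 * S22 = 0 := by
    ext a c
    have h := congrFun (congrFun hMN (Sum.inl a)) (Sum.inr (Sum.inr c))
    simp only [hMbdef, blk3, Matrix.mul_apply, Fintype.sum_sum_type,
      Matrix.fromBlocks_apply₁₁, Matrix.fromBlocks_apply₁₂, Matrix.fromBlocks_apply₂₁,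
      Matrix.fromBlocks_apply₂₂, Matrix.fromCols_apply_inl, Matrix.fromCols_apply_inr,
      Matrix.fromRows_apply_inl, Matrix.fromRows_apply_inr, Matrix.one_apply,
      h13, mul_zero, Finset.sum_const_zero, zero_add] at h
    simpa [Matrix.mul_apply, hS12def, hS21def, hS22def] using h
  have e2 : M22 * S12 + M23 * S22 = 0 := by
    ext b c
    have h := congrFun (congrFun hMN (Sum.inr (Sum.inl b))) (Sum.inr (Sum.inr c))
    simp only [hMbdef, blk3, Matrix.mul_apply, Fintype.sum_sum_type,
      Matrix.fromBlocks_apply₁₁, Matrix.fromBlocks_apply₁₂, Matrix.fromBlocks_apply₂₁,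
      Matrix.fromBlocks_apply₂₂, Matrix.fromCols_apply_inl, Matrix.fromCols_apply_inr,
      Matrix.fromRows_apply_inl, Matrix.fromRows_apply_inr, Matrix.one_apply,
      h13, mul_zero, Finset.sum_const_zero, zero_add] at h
    simpa [Matrix.mul_apply, hS12def, hS21def, hS22def] using h
  have e3 : M32 * S12 + M33 * S22 = 1 := by
    ext c' c
    have h := congrFun (congrFun hMN (Sum.inr (Sum.inr c'))) (Sum.inr (Sum.inr c))
    simp only [hMbdef, blk3, Matrix.mul_apply, Fintype.sum_sum_type,
      Matrix.fromBlocks_apply₁₁, Matrix.fromBlocks_apply₁₂, Matrix.fromBlocks_apply₂₁,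
      Matrix.fromBlocks_apply₂₂, Matrix.fromCols_apply_inl, Matrix.fromCols_apply_inr,
      Matrix.fromRows_apply_inl, Matrix.fromRows_apply_inr, Matrix.one_apply,
      h13, mul_zero, Finset.sum_const_zero, zero_add] at h
    simpa [Matrix.mul_apply, Matrix.one_apply, hS12def, hS21def, hS22def] using h
  have e4 : S21 * M22 + S22 * M32 = 0 := by
    ext c b
    have h := congrFun (congrFun hNM (Sum.inr (Sum.inr c))) (Sum.inr (Sum.inl b))
    simp only [hMbdef, blk3, Matrix.mul_apply, Fintype.sum_sum_type,
      Matrix.fromBlocks_apply₁₁, Matrix.fromBlocks_apply₁₂, Matrix.fromBlocks_apply₂₁,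
      Matrix.fromBlocks_apply₂₂, Matrix.fromCols_apply_inl, Matrix.fromCols_apply_inr,
      Matrix.fromRows_apply_inl, Matrix.fromRows_apply_inr, Matrix.one_apply,
      h31, zero_mul, Finset.sum_const_zero, zero_add] at h
    simpa [Matrix.mul_apply, hS12def, hS21def, hS22def] using h
  have e5 : S21 * M23 + S22 * M33 = 1 := by
    ext c c'
    have h := congrFun (congrFun hNM (Sum.inr (Sum.inr c))) (Sum.inr (Sum.inr c'))
    simp only [hMbdef, blk3, Matrix.mul_apply, Fintype.sum_sum_type,
      Matrix.fromBlocks_apply₁₁, Matrix.fromBlocks_apply₁₂, Matrix.fromBlocks_apply₂₁,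
      Matrix.fromBlocks_apply₂₂, Matrix.fromCols_apply_inl, Matrix.fromCols_apply_inr,
      Matrix.fromRows_apply_inl, Matrix.fromRows_apply_inr, Matrix.one_apply,
      h31, zero_mul, Finset.sum_const_zero, zero_add] at h
    simpa [Matrix.mul_apply, Matrix.one_apply, hS12def, hS21def, hS22def] using h
  have e6 : S21 * M21 + S22 * M31 = 0 := by
    ext c a
    have h := congrFun (congrFun hNM (Sum.inr (Sum.inr c))) (Sum.inl a)
    simp only [hMbdef, blk3, Matrix.mul_apply, Fintype.sum_sum_type,
      Matrix.fromBlocks_apply₁₁, Matrix.fromBlocks_apply₁₂, Matrix.fromBlocks_apply₂₁,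
      Matrix.fromBlocks_apply₂₂, Matrix.fromCols_apply_inl, Matrix.fromCols_apply_inr,
      Matrix.fromRows_apply_inl, Matrix.fromRows_apply_inr, Matrix.one_apply,
      h31, zero_mul, Finset.sum_const_zero, zero_add] at h
    simpa [Matrix.mul_apply, hS12def, hS21def, hS22def] using h
  have hinv : M22⁻¹ * M22 = 1 := nonsing_inv_mul _ hM22
  have hinv' : M22 * M22⁻¹ = 1 := mul_nonsing_inv _ hM22
  -- S12 in terms of S22
  have hS12 : S12 = -(M22⁻¹ * (M23 * S22)) := by
    have h' : M22 * S12 = -(M23 * S22) := eq_neg_of_add_eq_zero_left e2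
    calc S12 = (M22⁻¹ * M22) * S12 := by rw [hinv, Matrix.one_mul]
      _ = M22⁻¹ * (M22 * S12) := Matrix.mul_assoc _ _ _
      _ = -(M22⁻¹ * (M23 * S22)) := by rw [h', Matrix.mul_neg]
  have hS21 : S21 = -(S22 * M32 * M22⁻¹) := by
    have h' : S21 * M22 = -(S22 * M32) := eq_neg_of_add_eq_zero_left e4
    calc S21 = S21 * (M22 * M22⁻¹) := by rw [hinv', Matrix.mul_one]
      _ = S21 * M22 * M22⁻¹ := (Matrix.mul_assoc _ _ _).symm
      _ = -(S22 * M32 * M22⁻¹) := by rw [h', Matrix.neg_mul]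
  have h1 : (M33 - M32 * M22⁻¹ * M23) * S22 = 1 := by
    rw [hS12, Matrix.mul_neg, neg_add_eq_iff_eq_add] at e3
    rw [Matrix.sub_mul]
    rw [e3]
    simp [Matrix.mul_assoc]
  have h2 : S22 * (M33 - M32 * M22⁻¹ * M23) = 1 := by
    rw [hS21, Matrix.neg_mul, neg_add_eq_iff_eq_add] at e5
    rw [Matrix.mul_sub]
    rw [e5]
    simp [Matrix.mul_assoc]
  constructor
  · have key : (M13 - M12 * M22⁻¹ * M23) * S22 = 0 := by
      have h' : M23 * S22 = -(M22 * S12) := eq_neg_of_add_eq_zero_right e2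
      calc (M13 - M12 * M22⁻¹ * M23) * S22
          = M13 * S22 - M12 * M22⁻¹ * (M23 * S22) := by
            rw [Matrix.sub_mul, Matrix.mul_assoc (M12 * M22⁻¹)]
        _ = M13 * S22 - M12 * M22⁻¹ * (-(M22 * S12)) := by rw [h']
        _ = M13 * S22 + M12 * (M22⁻¹ * M22) * S12 := by
            rw [Matrix.mul_neg, sub_neg_eq_add, Matrix.mul_assoc M12, Matrix.mul_assoc M12,
              Matrix.mul_assoc]
        _ = M12 * S12 + M13 * S22 := by rw [hinv, Matrix.mul_one, add_comm]
        _ = 0 := e1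
    have : (M13 - M12 * M22⁻¹ * M23) * (S22 * (M33 - M32 * M22⁻¹ * M23)) = 0 := by
      rw [← Matrix.mul_assoc, key, Matrix.zero_mul]
    rw [h2, Matrix.mul_one] at this
    exact sub_eq_zero.mp this
  · have key : S22 * (M31 - M32 * M22⁻¹ * M21) = 0 := by
      have h' : S22 * M31 = -(S21 * M21) := eq_neg_of_add_eq_zero_right e6
      calc S22 * (M31 - M32 * M22⁻¹ * M21)
          = S22 * M31 - S22 * M32 * M22⁻¹ * M21 := by
            simp [Matrix.mul_sub, Matrix.mul_assoc]
        _ = -(S21 * M21) - S22 * M32 * M22⁻¹ * M21 := by rw [h']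
        _ = -(-(S22 * M32 * M22⁻¹) * M21) - S22 * M32 * M22⁻¹ * M21 := by rw [← hS21]
        _ = 0 := by rw [Matrix.neg_mul, neg_neg, sub_self]
    have : (M33 - M32 * M22⁻¹ * M23) * (S22 * (M31 - M32 * M22⁻¹ * M21)) = 0 := by
      rw [key, Matrix.mul_zero]
    rw [← Matrix.mul_assoc, h1, Matrix.one_mul] at this
    exact sub_eq_zero.mp this
end

section
/- Let M be a 3×3 block matrix with invertible M₂₂, satisfying M₁₃ = M₁₂ M₂₂⁻¹ M₂₃ and M₃₁ = M₃₂ M₂₂⁻¹ M₂₁, and suppose the sub-block matrices A = [[M₁₁,M₁₂],[M₂₁,M₂₂]] and B = [[M₂₂,M₂₃],[M₃₂,M₃₃]] are invertible. Then det(M) = det(A)·det(B)/det(M₂₂). -/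
open Matrix

variable {K : Type*} [Field K]
variable {α β γ : Type*} [Fintype α] [Fintype β] [Fintype γ]
  [DecidableEq α] [DecidableEq β] [DecidableEq γ]

theorem stmt_8 (M11 : Matrix α α K) (M12 : Matrix α β K)
    (M21 : Matrix β α K) (M22 : Matrix β β K) (M23 : Matrix β γ K)
    (M32 : Matrix γ β K) (M33 : Matrix γ γ K)
    (hM22 : IsUnit M22.det)
    (hA : IsUnit (Matrix.fromBlocks M11 M12 M21 M22).det)
    (hB : IsUnit (Matrix.fromBlocks M22 M23 M32 M33).det) :
    (blk3 M11 M12 (M12 * M22⁻¹ * M23) M21 M22 M23 (M32 * M22⁻¹ * M21) M32 M33).det =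
      (Matrix.fromBlocks M11 M12 M21 M22).det * (Matrix.fromBlocks M22 M23 M32 M33).det /
        M22.det := by
  set D := Matrix.fromBlocks M22 M23 M32 M33 with hD
  haveI : Invertible M22 := M22.invertibleOfIsUnitDet hM22
  haveI : Invertible D := D.invertibleOfIsUnitDet hB
  have key : Matrix.fromCols M12 (M12 * M22⁻¹ * M23) * ⅟ D *
      Matrix.fromRows M21 (M32 * M22⁻¹ * M21) = M12 * M22⁻¹ * M21 := by
    have h1 : Matrix.fromCols M12 (M12 * M22⁻¹ * M23) =
        Matrix.fromCols (M12 * M22⁻¹) (0 : Matrix α γ K) * D := by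
      rw [hD, fromCols_mul_fromBlocks]
      simp [Matrix.mul_assoc, Matrix.nonsing_inv_mul M22 hM22]
    have h2 : Matrix.fromRows M21 (M32 * M22⁻¹ * M21) =
        Matrix.fromRows 1 (M32 * M22⁻¹) * M21 := by
      rw [fromRows_mul]; simp
    rw [h1, h2, Matrix.mul_assoc _ D, mul_invOf_self, Matrix.mul_one,
      ← Matrix.mul_assoc, fromCols_mul_fromRows]
    simp [Matrix.mul_assoc]
  rw [show (blk3 M11 M12 (M12 * M22⁻¹ * M23) M21 M22 M23 (M32 * M22⁻¹ * M21) M32 M33)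
      = Matrix.fromBlocks M11 (Matrix.fromCols M12 (M12 * M22⁻¹ * M23))
        (Matrix.fromRows M21 (M32 * M22⁻¹ * M21)) D from rfl,
    Matrix.det_fromBlocks₂₂, key,
    Matrix.det_fromBlocks₂₂ M11 M12 M21 M22, Matrix.invOf_eq_nonsing_inv]
  have h22 : M22.det ≠ 0 := hM22.ne_zero
  field_simp
end

section
/- Let M be a block matrix [[M₁₁,M₁₂,X],[M₂₁,M₂₂,M₂₃],[Y,M₃₂,M₃₃]] over a field such that M₂₂ is invertible and M is invertible with the (1,3) and (3,1) blocks of M⁻¹ equal to zero. Then X and Y are uniquely determined: X = M₁₂ M₂₂⁻¹ M₂₃ and Y = M₃₂ M₂₂⁻¹ M₂₁; i.e., among block matrices agreeing with M on all blocks except the corners, at most one completion has inverse with zero corner blocks. -/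
open Matrix

variable {K : Type*} [Field K]
variable {α β γ : Type*} [Fintype α] [Fintype β] [Fintype γ]
  [DecidableEq α] [DecidableEq β] [DecidableEq γ]

theorem stmt_11 (M11 : Matrix α α K) (M12 : Matrix α β K) (X : Matrix α γ K)
    (M21 : Matrix β α K) (M22 : Matrix β β K) (M23 : Matrix β γ K)
    (Y : Matrix γ α K) (M32 : Matrix γ β K) (M33 : Matrix γ γ K)
    (hM22 : IsUnit M22.det)
    (hM : IsUnit (blk3 M11 M12 X M21 M22 M23 Y M32 M33).det)
    (h13 : ∀ (a : α) (c : γ),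
      (blk3 M11 M12 X M21 M22 M23 Y M32 M33)⁻¹ (Sum.inl a) (Sum.inr (Sum.inr c)) = 0)
    (h31 : ∀ (a : α) (c : γ),
      (blk3 M11 M12 X M21 M22 M23 Y M32 M33)⁻¹ (Sum.inr (Sum.inr c)) (Sum.inl a) = 0) :
    X = M12 * M22⁻¹ * M23 ∧ Y = M32 * M22⁻¹ * M21 := by
  set Mf := blk3 M11 M12 X M21 M22 M23 Y M32 M33 with hMf
  have hMN : Mf * Mf⁻¹ = 1 := Matrix.mul_nonsing_inv _ hM
  have hNM : Mf⁻¹ * Mf = 1 := Matrix.nonsing_inv_mul _ hM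
  set N := Mf⁻¹ with hN
  set N23 : Matrix β γ K := Matrix.of fun b c => N (Sum.inr (Sum.inl b)) (Sum.inr (Sum.inr c)) with hN23
  set N33 : Matrix γ γ K := Matrix.of fun c c' => N (Sum.inr (Sum.inr c)) (Sum.inr (Sum.inr c')) with hN33
  set N32 : Matrix γ β K := Matrix.of fun c b => N (Sum.inr (Sum.inr c)) (Sum.inr (Sum.inl b)) with hN32
  have e23 : M22 * N23 + M23 * N33 = 0 := by
    ext b c
    have h := congrFun (congrFun hMN (Sum.inr (Sum.inl b))) (Sum.inr (Sum.inr c))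
    simp only [Matrix.mul_apply, Fintype.sum_sum_type, hMf, blk3, Matrix.fromBlocks_apply₂₁,
      Matrix.fromBlocks_apply₂₂, Matrix.fromRows_apply_inl, Matrix.one_apply, h13,
      Matrix.add_apply, Matrix.zero_apply, hN23, hN33, Matrix.of_apply, mul_zero,
      Finset.sum_const_zero, zero_add, Sum.inr.injEq, Sum.inl.injEq, reduceCtorEq,
      if_false] at h ⊢
    exact h
  have e33 : M32 * N23 + M33 * N33 = 1 := by
    ext c c'
    have h := congrFun (congrFun hMN (Sum.inr (Sum.inr c))) (Sum.inr (Sum.inr c'))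
    simp only [Matrix.mul_apply, Fintype.sum_sum_type, hMf, blk3, Matrix.fromBlocks_apply₂₁,
      Matrix.fromBlocks_apply₂₂, Matrix.fromRows_apply_inr, Matrix.one_apply, h13,
      Matrix.add_apply, Matrix.zero_apply, hN23, hN33, Matrix.of_apply, mul_zero,
      Finset.sum_const_zero, zero_add, Sum.inr.injEq, Sum.inl.injEq, reduceCtorEq,
      if_false] at h ⊢
    exact h
  have e13 : M12 * N23 + X * N33 = 0 := by
    ext a c
    have h := congrFun (congrFun hMN (Sum.inl a)) (Sum.inr (Sum.inr c))
    simp only [Matrix.mul_apply, Fintype.sum_sum_type, hMf, blk3, Matrix.fromBlocks_apply₁₁,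
      Matrix.fromBlocks_apply₁₂, Matrix.fromCols_apply_inl, Matrix.fromCols_apply_inr,
      Matrix.one_apply, h13, Matrix.add_apply, Matrix.zero_apply, hN23, hN33, Matrix.of_apply,
      mul_zero, Finset.sum_const_zero, zero_add, Sum.inr.injEq, Sum.inl.injEq, reduceCtorEq,
      if_false] at h ⊢
    exact h
  have f32 : N32 * M22 + N33 * M32 = 0 := by
    ext c b
    have h := congrFun (congrFun hNM (Sum.inr (Sum.inr c))) (Sum.inr (Sum.inl b))
    simp only [Matrix.mul_apply, Fintype.sum_sum_type, hMf, blk3, Matrix.fromBlocks_apply₁₂,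
      Matrix.fromBlocks_apply₂₂, Matrix.fromCols_apply_inl, Matrix.one_apply, h31,
      Matrix.add_apply, Matrix.zero_apply, hN32, hN33, Matrix.of_apply, zero_mul,
      Finset.sum_const_zero, zero_add, Sum.inr.injEq, Sum.inl.injEq, reduceCtorEq,
      if_false] at h ⊢
    exact h
  have f31 : N32 * M21 + N33 * Y = 0 := by
    ext c a
    have h := congrFun (congrFun hNM (Sum.inr (Sum.inr c))) (Sum.inl a)
    simp only [Matrix.mul_apply, Fintype.sum_sum_type, hMf, blk3, Matrix.fromBlocks_apply₁₁,
      Matrix.fromBlocks_apply₂₁, Matrix.fromRows_apply_inl, Matrix.fromRows_apply_inr,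
      Matrix.one_apply, h31, Matrix.add_apply, Matrix.zero_apply, hN32, hN33, Matrix.of_apply,
      zero_mul, Finset.sum_const_zero, zero_add, Sum.inr.injEq, Sum.inl.injEq, reduceCtorEq,
      if_false] at h ⊢
    exact h
  have hN23eq : N23 = -(M22⁻¹ * (M23 * N33)) := by
    have h2 : M22 * N23 = -(M23 * N33) := eq_neg_of_add_eq_zero_left e23
    calc N23 = M22⁻¹ * (M22 * N23) := by
          rw [Matrix.nonsing_inv_mul_cancel_left _ _ hM22]
      _ = -(M22⁻¹ * (M23 * N33)) := by rw [h2, Matrix.mul_neg]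
  have hu : (M33 - M32 * (M22⁻¹ * (M23))) * N33 = 1 := by
    have expand : (M33 - M32 * (M22⁻¹ * M23)) * N33
        = M32 * -(M22⁻¹ * (M23 * N33)) + M33 * N33 := by
      simp [Matrix.sub_mul, Matrix.add_mul, Matrix.neg_mul, Matrix.mul_neg, Matrix.mul_assoc, sub_eq_neg_add]
    rw [expand, ← hN23eq, e33]
  have hdet : IsUnit N33.det :=
    Matrix.isUnit_det_of_left_inverse hu
  have hN32eq : N32 = -(N33 * M32 * M22⁻¹) := by
    have h2 : N32 * M22 = -(N33 * M32) := eq_neg_of_add_eq_zero_left f32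
    calc N32 = N32 * M22 * M22⁻¹ := by
          rw [Matrix.mul_nonsing_inv_cancel_right _ _ hM22]
      _ = -(N33 * M32 * M22⁻¹) := by rw [h2, Matrix.neg_mul]
  constructor
  · have h1 : X * N33 = (M12 * M22⁻¹ * M23) * N33 := by
      have h3 : X * N33 = (M12 * N23 + X * N33) - M12 * N23 := by noncomm_ring
      rw [h3, e13, hN23eq]
      simp [Matrix.mul_neg, Matrix.mul_assoc]
    calc X = X * N33 * N33⁻¹ := by rw [Matrix.mul_nonsing_inv_cancel_right _ _ hdet]
      _ = M12 * M22⁻¹ * M23 := by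
          rw [h1, Matrix.mul_nonsing_inv_cancel_right _ _ hdet]
  · have h1 : N33 * Y = N33 * (M32 * M22⁻¹ * M21) := by
      have h3 : N33 * Y = (N32 * M21 + N33 * Y) - N32 * M21 := by noncomm_ring
      rw [h3, f31, hN32eq]
      simp [Matrix.neg_mul, Matrix.mul_assoc]
    calc Y = N33⁻¹ * (N33 * Y) := by rw [Matrix.nonsing_inv_mul_cancel_left _ _ hdet]
      _ = M32 * M22⁻¹ * M21 := by
          rw [h1, Matrix.nonsing_inv_mul_cancel_left _ _ hdet]
end

section
/- Conversely, if M is a real symmetric positive definite 6×6 matrix with M i j = 0 for (i,j) ∈ {(1,5),(1,6),(2,5),(2,6)} (and symmetric positions), then its Cholesky factor R (the unique upper-triangular matrix with positive diagonal such that M = Rᵀ R) satisfies R i j = 0 for (i,j) ∈ {(1,5),(1,6),(2,5),(2,6)}. -/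
open Matrix

theorem stmt_13 (M : Matrix (Fin 6) (Fin 6) ℝ)
    (hM : M.PosDef)
    (h04 : M 0 4 = 0) (h05 : M 0 5 = 0) (h14 : M 1 4 = 0) (h15 : M 1 5 = 0)
    (h40 : M 4 0 = 0) (h50 : M 5 0 = 0) (h41 : M 4 1 = 0) (h51 : M 5 1 = 0)
    (R : Matrix (Fin 6) (Fin 6) ℝ)
    (htri : ∀ i j : Fin 6, j < i → R i j = 0)
    (hdiag : ∀ i : Fin 6, 0 < R i i)
    (hfac : M = Rᵀ * R) :
    R 0 4 = 0 ∧ R 0 5 = 0 ∧ R 1 4 = 0 ∧ R 1 5 = 0 := by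
  have key : ∀ i j : Fin 6, M i j = ∑ k : Fin 6, R k i * R k j := by
    intro i j
    rw [hfac]
    simp [Matrix.mul_apply, Matrix.transpose_apply]
  have z10 : R 1 0 = 0 := htri 1 0 (by decide)
  have z20 : R 2 0 = 0 := htri 2 0 (by decide)
  have z30 : R 3 0 = 0 := htri 3 0 (by decide)
  have z40 : R 4 0 = 0 := htri 4 0 (by decide)
  have z50 : R 5 0 = 0 := htri 5 0 (by decide)
  have z21 : R 2 1 = 0 := htri 2 1 (by decide)
  have z31 : R 3 1 = 0 := htri 3 1 (by decide)
  have z41 : R 4 1 = 0 := htri 4 1 (by decide)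
  have z51 : R 5 1 = 0 := htri 5 1 (by decide)
  have e04 := key 0 4
  have e05 := key 0 5
  rw [h04, Fin.sum_univ_six] at e04
  rw [h05, Fin.sum_univ_six] at e05
  simp [z10, z20, z30, z40, z50] at e04 e05
  have r04 : R 0 4 = 0 := e04.resolve_left (hdiag 0).ne'
  have r05 : R 0 5 = 0 := e05.resolve_left (hdiag 0).ne'
  have e14 := key 1 4
  have e15 := key 1 5
  rw [h14, Fin.sum_univ_six] at e14
  rw [h15, Fin.sum_univ_six] at e15
  simp [z21, z31, z41, z51, r04, r05] at e14 e15
  have r14 : R 1 4 = 0 := e14.resolve_left (hdiag 1).ne'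
  have r15 : R 1 5 = 0 := e15.resolve_left (hdiag 1).ne'
  exact ⟨r04, r05, r14, r15⟩
end
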